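/- If F is a minimal point-separating set of continuous real-valued functions on X, then the closure of F in C_p(X) is a minimal closed separating function set: it is closed, point-separating, and contains no proper closed point-separating subset. -/

import Mathlib

/-!
Separating a given pair of points is an open condition on a function of `C_p(X)`, and so is
being different from a given function. Hence if `G ⊆ closure F` separates points and
`f₀ ∉ G`, every witness in `G` can be traded for a witness in `F \ {f₀}`. Minimality of `F`
therefore forces `F ⊆ G`, and a closed such `G` contains `closure F`.
-/

/-- `C_p(X)`: continuous real-valued functions on `X` with the topology of pointwise
convergence (the subspace topology from the product `X → ℝ`). -/
def Cp (X : Type*) [TopologicalSpace X] : Type _ := {f : X → ℝ // Continuous f}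

instance (X : Type*) [TopologicalSpace X] : TopologicalSpace (Cp X) :=
  instTopologicalSpaceSubtype

def SepFun {X : Type*} [TopologicalSpace X] (F : Set (Cp X)) : Prop :=
  ∀ x y : X, x ≠ y → ∃ f ∈ F, f.1 x ≠ f.1 y

def MinSepFun {X : Type*} [TopologicalSpace X] (F : Set (Cp X)) : Prop :=
  SepFun F ∧ ∀ G ⊂ F, ¬ SepFun G

namespace Cp

variable {X : Type*} [TopologicalSpace X]

instance : T2Space (Cp X) := by
  unfold Cp; infer_instance

theorem continuous_eval (x : X) : Continuous fun f : Cp X => f.1 x :=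
  (continuous_apply x).comp continuous_subtype_val

theorem isOpen_setOf_apply_ne (x y : X) : IsOpen {f : Cp X | f.1 x ≠ f.1 y} :=
  isOpen_ne_fun (continuous_eval x) (continuous_eval y)

end Cp

namespace SepFun

variable {X : Type*} [TopologicalSpace X] {F G : Set (Cp X)}

theorem mono (hF : SepFun F) (hFG : F ⊆ G) : SepFun G := fun x y hxy =>
  let ⟨f, hf, hfxy⟩ := hF x y hxy
  ⟨f, hFG hf, hfxy⟩

theorem diff_singleton_of_subset_closure (hG : SepFun G) (hGF : G ⊆ closure F)
    {f₀ : Cp X} (hf₀ : f₀ ∉ G) : SepFun (F \ {f₀}) := by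
  intro x y hxy
  obtain ⟨g, hgG, hgxy⟩ := hG x y hxy
  have hU : IsOpen ({f : Cp X | f.1 x ≠ f.1 y} ∩ {f₀}ᶜ) :=
    (Cp.isOpen_setOf_apply_ne x y).inter isOpen_compl_singleton
  have hgf₀ : g ≠ f₀ := by rintro rfl; exact hf₀ hgG
  obtain ⟨f, ⟨hfxy, hff₀⟩, hfF⟩ := mem_closure_iff.mp (hGF hgG) _ hU ⟨hgxy, hgf₀⟩
  exact ⟨f, ⟨hfF, hff₀⟩, hfxy⟩

end SepFun

theorem MinSepFun.subset_of_sepFun_of_subset_closure {X : Type*} [TopologicalSpace X]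
    {F G : Set (Cp X)} (hF : MinSepFun F) (hG : SepFun G) (hGF : G ⊆ closure F) :
    F ⊆ G := by
  intro f₀ hf₀F
  by_contra hf₀G
  exact hF.2 (F \ {f₀}) (Set.sdiff_singleton_ssubset.mpr hf₀F)
    (hG.diff_singleton_of_subset_closure hGF hf₀G)

/-- The closure in `C_p(X)` of a minimal point-separating set is a minimal closed
separating set: it is closed, point-separating, and has no proper closed
point-separating subset. -/
theorem stmt15 {X : Type*} [TopologicalSpace X] (F : Set (Cp X)) (hF : MinSepFun F) :
    IsClosed (closure F) ∧ SepFun (closure F) ∧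
      ∀ G ⊂ closure F, IsClosed G → ¬ SepFun G := by
  refine ⟨isClosed_closure, hF.1.mono subset_closure, fun G hG hGc hGs => ?_⟩
  have hFG : F ⊆ G := hF.subset_of_sepFun_of_subset_closure hGs hG.subset
  exact hG.not_subset (closure_minimal hFG hGc)
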